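/- For any digraph D, χ⃗(D) ≤ χ⃗_g(D) ≤ Δ_c(D) + 1, where Δ_c(D) is the maximum cycle-degree of D. -/

import Mathlib

variable {V : Type*}

/-- A directed cycle in the digraph with arc relation `A`: a nonempty list of
pairwise distinct vertices forming a closed directed walk. -/
def IsDicycle (A : V → V → Prop) (l : List V) : Prop :=
  l ≠ [] ∧ l.Nodup ∧ l.Chain' A ∧ ∀ x ∈ l.getLast?, ∀ y ∈ l.head?, A x y

/-- The digraph with arc relation `A` has no directed cycle. -/
def Acyclic (A : V → V → Prop) : Prop := ¬ ∃ l : List V, IsDicycle A l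

/-- `S` intersects every directed cycle of `A` containing `v`. -/
def HitsCyclesThrough (A : V → V → Prop) (v : V) (S : Finset V) : Prop :=
  ∀ l : List V, IsDicycle A l → v ∈ l → ∃ u ∈ l, u ∈ S

/-- The cycle-degree of `v`: the minimum size of a set `S ⊆ V \ {v}`
intersecting every directed cycle containing `v`. -/
noncomputable def cycleDegree (A : V → V → Prop) (v : V) : ℕ :=
  sInf { n | ∃ S : Finset V, S.card = n ∧ v ∉ S ∧ HitsCyclesThrough A v S }

/-- A dicolouring: every colour class induces an acyclic subdigraph. -/
def IsDicolouring {C : Type*} (A : V → V → Prop) (φ : V → C) : Prop :=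
  ∀ c : C, Acyclic fun x y => A x y ∧ φ x = c ∧ φ y = c

/-- The dichromatic number: least `k` admitting a `k`-dicolouring. -/
noncomputable def dichromaticNumber (A : V → V → Prop) : ℕ :=
  sInf { k | ∃ φ : V → Fin k, IsDicolouring A φ }

/-- A greedy dicolouring: there is an ordering (given by an injective rank
function `o`) such that, for each vertex `v` and each colour `c < φ v`, the set
of earlier vertices coloured `c`, together with `v`, contains a directed
cycle. -/
def IsGreedy (A : V → V → Prop) {k : ℕ} (φ : V → Fin k) : Prop :=
  IsDicolouring A φ ∧ ∃ o : V → ℕ, Function.Injective o ∧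
    ∀ v : V, ∀ c : Fin k, c < φ v →
      ∃ l, IsDicycle A l ∧ ∀ x ∈ l, (o x < o v ∧ φ x = c) ∨ x = v

/-- The digrundy number: the maximum number of colours used by a greedy
dicolouring. -/
noncomputable def digrundy [Fintype V] (A : V → V → Prop) : ℕ :=
  sSup { m | ∃ (k : ℕ) (φ : V → Fin k),
    IsGreedy A φ ∧ (Finset.univ.image φ).card = m }

/-!
Colouring a loopless digraph greedily along any vertex ordering gives a greedy dicolouring, and
every dicolouring uses at least `χ⃗(D)` colours, so `χ⃗(D) ≤ χ⃗_g(D)`. Conversely, if `v` has colour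
`i` in a greedy dicolouring, then for each `c < i` there is a dicycle through `v` whose other
vertices all have colour `c`. A set `S ∌ v` meeting every dicycle through `v` therefore contains a
vertex of each colour `c < i`, whence `i ≤ d_c(v)` and at most `Δ_c(D) + 1` colours are used.
-/

open Finset

variable {A : V → V → Prop}

section Dicycles

variable {l : List V}

theorem isDicycle_restrict_iff {p : V → Prop} :
    IsDicycle (fun x y => A x y ∧ p x ∧ p y) l ↔ IsDicycle A l ∧ ∀ x ∈ l, p x := by
  constructor
  · rintro ⟨hne, hnd, hch, hcl⟩
    refine ⟨⟨hne, hnd, hch.imp fun _ _ h => h.1, fun x hx y hy => (hcl x hx y hy).1⟩, ?_⟩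
    refine List.IsChain.induction p l hch (fun _ _ h _ => h.2.2) fun hne' => ?_
    exact (hcl _ (List.getLast?_eq_some_getLast hne') _ (List.head?_eq_some_head hne')).2.2
  · rintro ⟨⟨hne, hnd, hch, hcl⟩, hp⟩
    refine ⟨hne, hnd, ?_, fun x hx y hy =>
      ⟨hcl x hx y hy, hp x (List.mem_of_getLast? hx), hp y (List.mem_of_head? hy)⟩⟩
    exact (List.IsChain.iff_mem.mp hch).imp fun x y h => ⟨h.2.2, hp x h.1, hp y h.2.1⟩

theorem IsDicycle.exists_ne (hl : IsDicycle A l) {v : V} (hv : ¬ A v v) : ∃ x ∈ l, x ≠ v := by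
  by_contra! h
  obtain ⟨hne, -, -, hcl⟩ := hl
  have harc := hcl _ (List.getLast?_eq_some_getLast hne) _ (List.head?_eq_some_head hne)
  rw [h _ (List.getLast_mem hne), h _ (List.head_mem hne)] at harc
  exact hv harc

end Dicycles

section Dicolouring

variable {C : Type*} {φ : V → C}

theorem isDicolouring_iff :
    IsDicolouring A φ ↔ ∀ c l, IsDicycle A l → ¬ ∀ x ∈ l, φ x = c := by
  simp only [IsDicolouring, Acyclic, isDicycle_restrict_iff (p := fun x => φ x = _)]
  grind

theorem IsDicolouring.not_adj_self (h : IsDicolouring A φ) (v : V) : ¬ A v v := fun hv =>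
  isDicolouring_iff.mp h (φ v) [v] ⟨by simp, by simp, List.isChain_singleton _, by simp [hv]⟩
    (by simp)

theorem IsDicolouring.of_comp {D : Type*} {f : C → D} (h : IsDicolouring A (f ∘ φ)) :
    IsDicolouring A φ :=
  isDicolouring_iff.mpr fun c l hl hc =>
    isDicolouring_iff.mp h (f c) l hl fun x hx => congrArg f (hc x hx)

theorem dichromaticNumber_le_card_image [Fintype V] [DecidableEq C] (h : IsDicolouring A φ) :
    dichromaticNumber A ≤ #(univ.image φ) := by
  let e := (univ.image φ).equivFin
  refine Nat.sInf_le ⟨fun v => e ⟨φ v, mem_image_of_mem φ (mem_univ v)⟩, ?_⟩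
  refine IsDicolouring.of_comp (f := fun i => (e.symm i : C)) ?_
  simpa [Function.comp_def] using h

theorem dichromaticNumber_eq_zero_of_adj_self {v : V} (hv : A v v) : dichromaticNumber A = 0 :=
  Nat.sInf_eq_zero.mpr <| Or.inr <| Set.eq_empty_of_forall_notMem fun _ ⟨_, hφ⟩ =>
    hφ.not_adj_self v hv

end Dicolouring

theorem le_card_of_forall_lt_exists {S : Finset V} {f : V → ℕ} {n : ℕ}
    (h : ∀ c < n, ∃ u ∈ S, f u = c) : n ≤ #S := by
  classical
  calc n = #(range n) := (card_range n).symm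
    _ ≤ #(S.image f) := card_le_card fun c hc =>
        let ⟨u, hu, hfu⟩ := h c (mem_range.mp hc)
        mem_image.mpr ⟨u, hu, hfu⟩
    _ ≤ #S := card_image_le

section GreedyColour

variable (A) (r : V → ℕ)

-- `∃ _ : r x < r v, _` rather than `∧` puts the rank decrease in scope for termination.
noncomputable def greedyColour (v : V) : ℕ :=
  sInf {c | ¬ ∃ l : List V, IsDicycle A l ∧
    ∀ x ∈ l, (∃ _ : r x < r v, greedyColour x = c) ∨ x = v}
termination_by r v

variable {A r}

theorem greedyColour_eq (v : V) :
    greedyColour A r v = sInf {c | ¬ ∃ l : List V, IsDicycle A l ∧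
      ∀ x ∈ l, (r x < r v ∧ greedyColour A r x = c) ∨ x = v} := by
  rw [greedyColour]
  simp only [exists_prop]

theorem exists_isDicycle_of_lt_greedyColour {v : V} {c : ℕ} (hc : c < greedyColour A r v) :
    ∃ l : List V, IsDicycle A l ∧ ∀ x ∈ l, (r x < r v ∧ greedyColour A r x = c) ∨ x = v := by
  rw [greedyColour_eq] at hc
  exact not_not.mp (Nat.notMem_of_lt_sInf hc)

theorem not_exists_isDicycle_greedyColour [Fintype V] {v : V} (hv : ¬ A v v) :
    ¬ ∃ l : List V, IsDicycle A l ∧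
      ∀ x ∈ l, (r x < r v ∧ greedyColour A r x = greedyColour A r v) ∨ x = v := by
  classical
  obtain ⟨c, hc⟩ := Infinite.exists_notMem_finset (univ.image (greedyColour A r))
  have hmem := Nat.sInf_mem (s := {c | ¬ ∃ l : List V, IsDicycle A l ∧
      ∀ x ∈ l, (r x < r v ∧ greedyColour A r x = c) ∨ x = v}) ⟨c, ?_⟩
  · rwa [← greedyColour_eq] at hmem
  rintro ⟨l, hl, hx⟩
  obtain ⟨x, hxl, hxv⟩ := hl.exists_ne hv
  exact hc (mem_image.mpr ⟨x, mem_univ x, ((hx x hxl).resolve_right hxv).2⟩)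

theorem greedyColour_lt_card [Fintype V] {v : V} (hv : ¬ A v v) :
    greedyColour A r v < Fintype.card V := by
  classical
  calc greedyColour A r v ≤ #{x | r x < r v} := le_card_of_forall_lt_exists fun c hc => by
        obtain ⟨l, hl, hx⟩ := exists_isDicycle_of_lt_greedyColour hc
        obtain ⟨x, hxl, hxv⟩ := hl.exists_ne hv
        obtain ⟨hxr, hxc⟩ := (hx x hxl).resolve_right hxv
        exact ⟨x, by simpa using hxr, hxc⟩
    _ < Fintype.card V := card_lt_univ_of_notMem (x := v) (by simp)

/-- A monochromatic dicycle would be closed by its vertex of largest rank. -/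
theorem isDicolouring_greedyColour [Fintype V] (hr : Function.Injective r)
    (hloop : ∀ v, ¬ A v v) : IsDicolouring A (greedyColour A r) := by
  classical
  refine isDicolouring_iff.mpr fun c l hl hc => ?_
  obtain ⟨v, hvl, hvmax⟩ := l.toFinset.exists_max_image r ⟨_, List.mem_toFinset.mpr
    (List.head_mem hl.1)⟩
  rw [List.mem_toFinset] at hvl
  refine not_exists_isDicycle_greedyColour (r := r) (hloop v) ⟨l, hl, fun x hx => ?_⟩
  rcases eq_or_ne x v with rfl | hxv
  · exact Or.inr rfl
  · exact Or.inl ⟨(hvmax x (List.mem_toFinset.mpr hx)).lt_of_ne (hr.ne hxv),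
      (hc x hx).trans (hc v hvl).symm⟩

end GreedyColour

theorem exists_isGreedy [Fintype V] (hloop : ∀ v, ¬ A v v) :
    ∃ (k : ℕ) (φ : V → Fin k), IsGreedy A φ := by
  let r : V → ℕ := fun v => Fintype.equivFin V v
  have hr : Function.Injective r := Fin.val_injective.comp (Fintype.equivFin V).injective
  refine ⟨_, fun v => ⟨greedyColour A r v, greedyColour_lt_card (hloop v)⟩, ?_, r, hr, ?_⟩
  · exact IsDicolouring.of_comp (f := Fin.val) (isDicolouring_greedyColour hr hloop)
  · intro v c hc
    obtain ⟨l, hl, hx⟩ := exists_isDicycle_of_lt_greedyColour (r := r) (Fin.lt_def.mp hc)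
    exact ⟨l, hl, fun x hxl => (hx x hxl).imp (fun h => ⟨h.1, Fin.ext h.2⟩) id⟩

section IsGreedy

variable {k : ℕ} {φ : V → Fin k}

theorem IsGreedy.val_le_card (hg : IsGreedy A φ) {v : V} {S : Finset V} (hvS : v ∉ S)
    (hS : HitsCyclesThrough A v S) : (φ v : ℕ) ≤ #S := by
  obtain ⟨hdic, o, -, hgr⟩ := hg
  refine le_card_of_forall_lt_exists (f := fun u => (φ u : ℕ)) fun c hc => ?_
  obtain ⟨l, hl, hx⟩ := hgr v ⟨c, hc.trans (φ v).isLt⟩ (Fin.lt_def.mpr hc)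
  have hvl : v ∈ l := by
    by_contra hvl
    refine isDicolouring_iff.mp hdic _ l hl fun x hxl => ((hx x hxl).resolve_right ?_).2
    rintro rfl
    exact hvl hxl
  obtain ⟨u, hul, huS⟩ := hS l hl hvl
  have huv : u ≠ v := fun h => hvS (h ▸ huS)
  exact ⟨u, huS, congrArg Fin.val ((hx u hul).resolve_right huv).2⟩

theorem exists_hitsCyclesThrough_card_eq_cycleDegree [Fintype V] {v : V} (hv : ¬ A v v) :
    ∃ S : Finset V, #S = cycleDegree A v ∧ v ∉ S ∧ HitsCyclesThrough A v S := by
  classical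
  refine Nat.sInf_mem (s := {n | ∃ S : Finset V, #S = n ∧ v ∉ S ∧ HitsCyclesThrough A v S})
    ⟨_, univ.erase v, rfl, notMem_erase v _, fun l hl _ => ?_⟩
  obtain ⟨u, hul, huv⟩ := hl.exists_ne hv
  exact ⟨u, hul, mem_erase.mpr ⟨huv, mem_univ u⟩⟩

theorem IsGreedy.val_le_cycleDegree [Fintype V] (hg : IsGreedy A φ) (v : V) :
    (φ v : ℕ) ≤ cycleDegree A v := by
  obtain ⟨S, hcard, hvS, hS⟩ :=
    exists_hitsCyclesThrough_card_eq_cycleDegree (hg.1.not_adj_self v)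
  exact hcard ▸ hg.val_le_card hvS hS

theorem IsGreedy.card_image_le [Fintype V] (hg : IsGreedy A φ) :
    #(univ.image φ) ≤ (univ.sup fun v => cycleDegree A v) + 1 := by
  rw [← card_range ((univ.sup fun v => cycleDegree A v) + 1)]
  refine card_le_card_of_injOn Fin.val (fun c hc => ?_) Fin.val_injective.injOn
  obtain ⟨v, -, rfl⟩ := mem_image.mp hc
  exact mem_range.mpr (Nat.lt_succ_of_le
    ((hg.val_le_cycleDegree v).trans (le_sup (f := fun v => cycleDegree A v) (mem_univ v))))

theorem IsGreedy.card_image_le_digrundy [Fintype V] (hg : IsGreedy A φ) :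
    #(univ.image φ) ≤ digrundy A := by
  refine le_csSup ⟨Fintype.card V, ?_⟩ ⟨k, φ, hg, rfl⟩
  rintro m ⟨k, φ, -, rfl⟩
  exact Finset.card_image_le.trans_eq card_univ

end IsGreedy

theorem stmt10_general [Fintype V] (A : V → V → Prop) :
    dichromaticNumber A ≤ digrundy A ∧
      digrundy A ≤ (Finset.univ.sup fun v => cycleDegree A v) + 1 := by
  refine ⟨?_, csSup_le' ?_⟩
  · by_cases hloop : ∃ v, A v v
    -- a loop admits no dicolouring, so `dichromaticNumber A = sInf ∅ = 0`
    · obtain ⟨v, hv⟩ := hloop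
      simp [dichromaticNumber_eq_zero_of_adj_self hv]
    · obtain ⟨k, φ, hφ⟩ := exists_isGreedy fun v hv => hloop ⟨v, hv⟩
      exact (dichromaticNumber_le_card_image hφ.1).trans hφ.card_image_le_digrundy
  · rintro m ⟨k, φ, hφ, rfl⟩
    exact hφ.card_image_le

theorem stmt10 [Fintype V] [DecidableEq V] (A : V → V → Prop) :
    dichromaticNumber A ≤ digrundy A ∧
      digrundy A ≤ (Finset.univ.sup fun v => cycleDegree A v) + 1 :=
  stmt10_general A
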